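/- arXiv:math/0303094 — 5 statements merged into one kernel-verified Lean document; each statement's English description precedes it below -/
import Mathlib

section
/- Let A be an m×n matrix with nonnegative integer entries and b a vector in ℕ^m. If the polynomial z^b - 1 (i.e., z_1^{b_1}···z_m^{b_m} - 1) can be written as ∑_{j=1}^n Q_j(z)(z^{A_j} - 1), where A_j denotes the j-th column of A and each Q_j is a polynomial in ℝ[z_1,…,z_m] with nonnegative coefficients, then the system Ax = b has a solution x ∈ ℕ^n. -/
/-!
Let `M` be the additive monoid generated by the columns `A_j`, and let `φ` be the linear functional
summing the coefficients of a polynomial at the exponents lying in `M`. Rewrite the hypothesis as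
`z^b + ∑ Q_j = 1 + ∑ Q_j z^{A_j}`. Multiplying by `z^{A_j}` maps exponents in `M` into `M`, so for
nonnegative `Q_j` we have `φ (Q_j z^{A_j}) ≥ φ (Q_j)`. Applying `φ` to the identity therefore gives
`φ (z^b) ≥ φ 1 = 1`, which forces `b ∈ M`.
-/

open MvPolynomial

namespace MvPolynomial

variable {σ R : Type*}

theorem prod_X_pow_eq_monomial_equivFunOnFinite [Fintype σ] [CommSemiring R] (f : σ → ℕ) :
    ∏ i, X i ^ f i = monomial (Finsupp.equivFunOnFinite.symm f) (1 : R) := by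
  rw [monomial_eq, C_1, one_mul, Finsupp.prod_fintype _ _ fun i => pow_zero _]
  rfl

noncomputable def coeffSumOn [CommSemiring R] (M : Set (σ →₀ ℕ)) : MvPolynomial σ R →ₗ[R] R :=
  Finsupp.linearCombination R (M.indicator 1) ∘ₗ (AddMonoidAlgebra.coeffLinearEquiv R).toLinearMap

theorem coeffSumOn_monomial [CommSemiring R] (M : Set (σ →₀ ℕ)) (α : σ →₀ ℕ) (r : R) :
    coeffSumOn M (monomial α r) = M.indicator (fun _ => r) α := by
  classical
  simp [coeffSumOn, Set.indicator_apply, monomial]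

theorem coeffSumOn_le_coeffSumOn_mul_monomial [CommSemiring R] [PartialOrder R]
    [IsOrderedAddMonoid R] (M : AddSubmonoid (σ →₀ ℕ)) {c : σ →₀ ℕ} (hc : c ∈ M)
    {p : MvPolynomial σ R} (hp : ∀ d, 0 ≤ p.coeff d) :
    coeffSumOn M p ≤ coeffSumOn M (p * monomial c 1) := by
  rw [p.as_sum, Finset.sum_mul, map_sum, map_sum]
  refine Finset.sum_le_sum fun α _ => ?_
  rw [monomial_mul, mul_one, coeffSumOn_monomial, coeffSumOn_monomial]
  exact Set.indicator_apply_le'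
    (fun hα => (Set.indicator_of_mem (M.add_mem hα hc) (fun _ => p.coeff α)).ge)
    fun _ => Set.indicator_nonneg (fun _ _ => hp α) _

theorem mem_closure_range_of_monomial_sub_one_eq_sum {ι : Type*} [Fintype ι] [CommRing R]
    [PartialOrder R] [IsOrderedRing R] [Nontrivial R] {b : σ →₀ ℕ} {c : ι → σ →₀ ℕ}
    {Q : ι → MvPolynomial σ R} (hQ : ∀ j d, 0 ≤ (Q j).coeff d)
    (h : monomial b 1 - 1 = ∑ j, Q j * (monomial (c j) 1 - 1)) :
    b ∈ AddSubmonoid.closure (Set.range c) := by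
  set M := AddSubmonoid.closure (Set.range c)
  have hφ : coeffSumOn M (monomial b 1) + ∑ j, coeffSumOn M (Q j) =
      1 + ∑ j, coeffSumOn M (Q j * monomial (c j) 1) := by
    have hpos : monomial b 1 + ∑ j, Q j = 1 + ∑ j, Q j * monomial (c j) 1 := by
      simp only [mul_sub, mul_one, Finset.sum_sub_distrib] at h
      linear_combination h
    have hφ_one : coeffSumOn (R := R) (M : Set (σ →₀ ℕ)) 1 = 1 := by
      rw [← C_1, C_apply, coeffSumOn_monomial, Set.indicator_of_mem M.zero_mem]
    simpa only [map_add, map_sum, hφ_one] using congrArg (coeffSumOn M) hpos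
  have hshift : ∑ j, coeffSumOn M (Q j) ≤ ∑ j, coeffSumOn M (Q j * monomial (c j) 1) :=
    Finset.sum_le_sum fun j _ => coeffSumOn_le_coeffSumOn_mul_monomial M
      (AddSubmonoid.subset_closure ⟨j, rfl⟩) (hQ j)
  by_contra hb
  rw [coeffSumOn_monomial, Set.indicator_of_notMem hb, zero_add] at hφ
  exact (zero_lt_one' R).not_ge (add_le_iff_nonpos_left.mp (hφ ▸ hshift))

end MvPolynomial

theorem discrete_farkas_sufficiency
    (m n : ℕ) (A : Matrix (Fin m) (Fin n) ℕ) (b : Fin m → ℕ)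
    (Q : Fin n → MvPolynomial (Fin m) ℝ)
    (hQ : ∀ j d, 0 ≤ (Q j).coeff d)
    (h : (∏ i, X i ^ b i : MvPolynomial (Fin m) ℝ) - 1 =
        ∑ j, Q j * ((∏ i, X i ^ A i j) - 1)) :
    ∃ x : Fin n → ℕ, ∀ i, ∑ j, A i j * x j = b i := by
  simp only [prod_X_pow_eq_monomial_equivFunOnFinite] at h
  obtain ⟨x, hx⟩ := AddSubmonoid.mem_closure_range_iff_of_fintype.mp
    (mem_closure_range_of_monomial_sub_one_eq_sum hQ h)
  refine ⟨x, fun i => ?_⟩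
  simpa [Finsupp.finsetSum_apply, mul_comm] using (DFunLike.congr_fun hx i).symm
end

section
/- Let A ∈ ℕ^{m×n} and b ∈ ℕ^m. Then the system Ax = b has a solution x ∈ ℕ^n if and only if the polynomial z^b - 1 can be written as ∑_{j=1}^n Q_j(z)(z^{A_j} - 1) for some polynomials Q_j ∈ ℝ[z_1,…,z_m] with nonnegative coefficients (discrete Farkas lemma). -/
/-!
Write `z^a` for the monomial with exponent `a`. If `b = A x`, then `z^b - 1` is a nonnegative
combination of the `z^(A_j) - 1`, because exponents admitting such a certificate form an additive
submonoid: `z^(b+c) - 1 = z^b (z^c - 1) + (z^b - 1)`. Conversely, let `S` be the submonoid generated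
by the columns and `φ` the linear functional summing the coefficients of the monomials in `S`.
Since `S + A_j ⊆ S`, `φ (Q (z^(A_j) - 1)) ≥ 0` whenever `Q` has nonnegative coefficients, while
`φ (z^b - 1) = -1` if `b ∉ S`.
-/

open MvPolynomial Finset
open scoped Matrix

namespace MvPolynomial

theorem prod_univ_X_pow_eq_monomial {σ R : Type*} [Fintype σ] [CommSemiring R] (w : σ → ℕ) :
    ∏ i, X i ^ w i = monomial (Finsupp.equivFunOnFinite.symm w) (1 : R) := by
  rw [monomial_eq, C_1, one_mul, Finsupp.prod_fintype] <;> simp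

section Nonneg

variable (σ R : Type*) [CommSemiring R] [PartialOrder R] [IsOrderedRing R]

def nonnegCoeffs : Subsemiring (MvPolynomial σ R) where
  carrier := {p | ∀ d, 0 ≤ p.coeff d}
  mul_mem' {p q} hp hq d := by
    classical
    rw [coeff_mul]
    exact sum_nonneg fun x _ => mul_nonneg (hp _) (hq _)
  one_mem' d := by
    classical
    rw [coeff_one]
    split_ifs <;> simp
  add_mem' {p q} hp hq d := by
    rw [coeff_add]
    exact add_nonneg (hp d) (hq d)
  zero_mem' d := by simp

variable {σ R}

theorem mem_nonnegCoeffs {p : MvPolynomial σ R} :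
    p ∈ nonnegCoeffs σ R ↔ ∀ d, 0 ≤ p.coeff d :=
  Iff.rfl

theorem monomial_mem_nonnegCoeffs (d : σ →₀ ℕ) {c : R} (hc : 0 ≤ c) :
    monomial d c ∈ nonnegCoeffs σ R := fun e => by
  classical
  rw [coeff_monomial]
  split_ifs <;> simp [hc]

end Nonneg

section SumCoeffsOn

variable {σ R : Type*} [CommRing R]

noncomputable def sumCoeffsOn (S : Set (σ →₀ ℕ)) : MvPolynomial σ R →ₗ[R] R :=
  (basisMonomials σ R).constr R (S.indicator 1)

theorem sumCoeffsOn_monomial (S : Set (σ →₀ ℕ)) (d : σ →₀ ℕ) (c : R) :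
    sumCoeffsOn S (monomial d c) = c * S.indicator 1 d := by
  have hsmul : monomial d c = c • monomial d (1 : R) := by
    rw [smul_monomial, smul_eq_mul, mul_one]
  rw [hsmul, map_smul, smul_eq_mul, sumCoeffsOn]
  exact congrArg (c * ·) ((basisMonomials σ R).constr_basis R _ d)

variable [PartialOrder R] [IsOrderedRing R]

theorem sumCoeffsOn_mul_monomial_sub_one_nonneg {S : Set (σ →₀ ℕ)} {a : σ →₀ ℕ}
    (hS : ∀ d ∈ S, d + a ∈ S) {Q : MvPolynomial σ R} (hQ : Q ∈ nonnegCoeffs σ R) :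
    0 ≤ sumCoeffsOn S (Q * (monomial a 1 - 1)) := by
  have indicator_le (d : σ →₀ ℕ) :
      S.indicator (1 : (σ →₀ ℕ) → R) d ≤ S.indicator 1 (d + a) := by
    by_cases hd : d ∈ S
    · simp [hd, hS d hd]
    · simp [hd, Set.indicator_nonneg]
  rw [Q.as_sum, sum_mul, map_sum]
  refine sum_nonneg fun d _ => ?_
  rw [mul_sub, mul_one, monomial_mul, mul_one, map_sub, sumCoeffsOn_monomial,
    sumCoeffsOn_monomial, ← mul_sub]
  exact mul_nonneg (hQ d) (sub_nonneg.mpr (indicator_le d))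

end SumCoeffsOn

section Certificate

variable (R : Type*) [CommRing R] [PartialOrder R] [IsOrderedRing R] {σ ι : Type*} [Fintype ι]

def certifiedExponents (a : ι → σ →₀ ℕ) : AddSubmonoid (σ →₀ ℕ) where
  carrier := {b | ∃ Q : ι → MvPolynomial σ R, (∀ j, Q j ∈ nonnegCoeffs σ R) ∧
    monomial b 1 - 1 = ∑ j, Q j * (monomial (a j) 1 - 1)}
  zero_mem' := ⟨0, fun _ => zero_mem _, by simp⟩
  add_mem' := by
    rintro b c ⟨Q, hQ, hb⟩ ⟨Q', hQ', hc⟩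
    refine ⟨fun j => monomial b 1 * Q' j + Q j,
      fun j => add_mem (mul_mem (monomial_mem_nonnegCoeffs b zero_le_one) (hQ' j)) (hQ j), ?_⟩
    have hmul : monomial (b + c) (1 : R) = monomial b 1 * monomial c 1 := by
      rw [monomial_mul, one_mul]
    have hsplit : monomial (b + c) (1 : R) - 1 =
        monomial b 1 * (monomial c 1 - 1) + (monomial b 1 - 1) := by
      rw [hmul]
      ring
    simp only [hsplit, hb, hc, add_mul, sum_add_distrib, mul_sum, mul_assoc]

variable {R}

theorem mem_certifiedExponents {a : ι → σ →₀ ℕ} {b : σ →₀ ℕ} :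
    b ∈ certifiedExponents R a ↔
      ∃ Q : ι → MvPolynomial σ R, (∀ j, Q j ∈ nonnegCoeffs σ R) ∧
        monomial b 1 - 1 = ∑ j, Q j * (monomial (a j) 1 - 1) :=
  Iff.rfl

theorem closure_le_certifiedExponents (a : ι → σ →₀ ℕ) :
    AddSubmonoid.closure (Set.range a) ≤ certifiedExponents R a := by
  classical
  refine AddSubmonoid.closure_le.mpr ?_
  rintro _ ⟨j, rfl⟩
  refine ⟨fun k => if k = j then 1 else 0, fun k => ?_, ?_⟩
  · dsimp only
    split_ifs
    exacts [one_mem _, zero_mem _]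
  · simp [ite_mul]

theorem certifiedExponents_le_closure [Nontrivial R] (a : ι → σ →₀ ℕ) :
    certifiedExponents R a ≤ AddSubmonoid.closure (Set.range a) := by
  rintro b ⟨Q, hQ, hb⟩
  set S := AddSubmonoid.closure (Set.range a)
  have hS : ∀ j, ∀ d ∈ S, d + a j ∈ S := fun j d hd =>
    add_mem hd (AddSubmonoid.subset_closure (Set.mem_range_self j))
  have rhs_nonneg :
      0 ≤ sumCoeffsOn (S : Set (σ →₀ ℕ)) (∑ j, Q j * (monomial (a j) 1 - 1)) := by
    rw [map_sum]
    exact sum_nonneg fun j _ => sumCoeffsOn_mul_monomial_sub_one_nonneg (hS j) (hQ j)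
  by_contra hbS
  have lhs_neg : sumCoeffsOn (S : Set (σ →₀ ℕ)) (monomial b (1 : R) - 1) = -1 := by
    rw [one_def, map_sub, sumCoeffsOn_monomial, sumCoeffsOn_monomial,
      Set.indicator_of_notMem hbS, Set.indicator_of_mem (zero_mem S)]
    simp
  rw [← hb, lhs_neg] at rhs_nonneg
  exact zero_lt_one.not_ge (neg_nonneg.mp rhs_nonneg)

theorem certifiedExponents_eq_closure [Nontrivial R] (a : ι → σ →₀ ℕ) :
    certifiedExponents R a = AddSubmonoid.closure (Set.range a) :=
  le_antisymm (certifiedExponents_le_closure a) (closure_le_certifiedExponents a)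

end Certificate

end MvPolynomial

theorem Matrix.mem_closure_range_col_iff {σ ι : Type*} [Fintype σ] [Fintype ι]
    (A : Matrix σ ι ℕ) (b : σ → ℕ) :
    Finsupp.equivFunOnFinite.symm b ∈
        AddSubmonoid.closure (Set.range fun j => Finsupp.equivFunOnFinite.symm fun i => A i j) ↔
      ∃ x, A *ᵥ x = b := by
  rw [AddSubmonoid.mem_closure_range_iff_of_fintype]
  refine exists_congr fun x => ?_
  simp [Finsupp.ext_iff, funext_iff, Matrix.mulVec, dotProduct, mul_comm, eq_comm]

theorem discrete_farkas_lemma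
    (m n : ℕ) (A : Matrix (Fin m) (Fin n) ℕ) (b : Fin m → ℕ) :
    (∃ x : Fin n → ℕ, ∀ i, ∑ j, A i j * x j = b i) ↔
    (∃ Q : Fin n → MvPolynomial (Fin m) ℝ,
      (∀ j d, 0 ≤ (Q j).coeff d) ∧
      (∏ i, X i ^ b i : MvPolynomial (Fin m) ℝ) - 1 =
        ∑ j, Q j * ((∏ i, X i ^ A i j) - 1)) := by
  have solvable_iff :
      (∃ x : Fin n → ℕ, ∀ i, ∑ j, A i j * x j = b i) ↔ ∃ x, A *ᵥ x = b := by
    simp only [funext_iff, Matrix.mulVec, dotProduct]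
  rw [solvable_iff, ← A.mem_closure_range_col_iff, ← certifiedExponents_eq_closure (R := ℝ)]
  simp only [mem_certifiedExponents, mem_nonnegCoeffs, prod_univ_X_pow_eq_monomial]
end

section
/- Let A ∈ ℕ^{m×n} and b ∈ ℕ^m, and suppose Ax = b has a solution x ∈ ℕ^n. Then z^b - 1 = ∑_{j=1}^n Q_j(z)(z^{A_j} - 1) for polynomials Q_j with nonnegative coefficients whose degrees are all bounded by b* := (∑_{j=1}^m b_j) - min_{k} ∑_{j=1}^m A_{jk}. -/
/-! If `Q` and `P` are certificates for `z^u - 1` and `z^v - 1` (nonnegative coefficients,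
`deg Q_j ≤ |u| - |A_j|`), then `z^u P + Q` is one for `z^(u+v) - 1`, because
`z^(u+v) - 1 = z^u (z^v - 1) + (z^u - 1)`. Hence the exponents admitting a certificate form an
additive submonoid of `ℕ^m`. It contains each column `A_j` (take `Q = e_j`), so it contains every
`b = A x`, and `|b| - |A_j| ≤ |b| - min_k |A_k|`. -/

open MvPolynomial

namespace MvPolynomial

variable {σ ι R : Type*}

theorem totalDegree_le_of_forall_degree_le [CommSemiring R] {p : MvPolynomial σ R} {n : ℕ}
    (h : ∀ d ∈ p.support, d.degree ≤ n) : p.totalDegree ≤ n :=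
  Finset.sup_le h

theorem prod_X_pow_eq_monomial_equivFunOnFinite_symm [CommSemiring R] [Fintype σ] (f : σ → ℕ) :
    ∏ i, X i ^ f i = monomial (Finsupp.equivFunOnFinite.symm f) (1 : R) := by
  rw [monomial_eq, C_1, one_mul, Finsupp.prod_fintype _ _ fun _ => pow_zero _]
  rfl

variable [Fintype ι] [CommRing R] [PartialOrder R]

structure IsFarkasCertificate (a : ι → σ →₀ ℕ) (b : σ →₀ ℕ) (Q : ι → MvPolynomial σ R) :
    Prop where
  coeff_nonneg : ∀ j d, 0 ≤ (Q j).coeff d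
  -- `deg (Q j) ≤ |b| - |a j|`, phrased so that it holds vacuously for `Q j = 0`
  degree_add_le : ∀ j, ∀ d ∈ (Q j).support, d.degree + (a j).degree ≤ b.degree
  sub_one_eq : monomial b 1 - 1 = ∑ j, Q j * (monomial (a j) 1 - 1)

namespace IsFarkasCertificate

variable {a : ι → σ →₀ ℕ}

theorem zero : IsFarkasCertificate a 0 (0 : ι → MvPolynomial σ R) where
  coeff_nonneg := by simp
  degree_add_le := by simp
  sub_one_eq := by simp

theorem single [IsOrderedRing R] [DecidableEq ι] (j : ι) :
    IsFarkasCertificate a (a j) (Pi.single j (1 : MvPolynomial σ R)) where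
  coeff_nonneg i d := by
    classical
    rcases eq_or_ne i j with rfl | hij
    · simp only [Pi.single_eq_same, coeff_one]; split_ifs <;> simp
    · simp [hij]
  degree_add_le i d hd := by
    classical
    rcases eq_or_ne i j with rfl | hij
    · obtain ⟨rfl, -⟩ : 0 = d ∧ (1 : R) ≠ 0 := by simpa [coeff_one] using hd
      simp
    · simp_all
  sub_one_eq := by simp [Pi.single_apply]

theorem add [IsOrderedRing R] {u v : σ →₀ ℕ} {Q P : ι → MvPolynomial σ R}
    (hQ : IsFarkasCertificate a u Q) (hP : IsFarkasCertificate a v P) :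
    IsFarkasCertificate a (u + v) (fun j => monomial u 1 * P j + Q j) where
  coeff_nonneg j d := by
    rw [coeff_add, coeff_monomial_mul']
    split_ifs
    · exact add_nonneg (by simpa using hP.coeff_nonneg j _) (hQ.coeff_nonneg j d)
    · simpa using hQ.coeff_nonneg j d
  degree_add_le j d hd := by
    classical
    rw [map_add]
    rcases Finset.mem_union.mp (support_add hd) with hd | hd
    · rw [mem_support_iff, coeff_monomial_mul'] at hd
      split_ifs at hd with hud
      · obtain ⟨e, rfl⟩ := exists_add_of_le hud
        have := hP.degree_add_le j e (mem_support_iff.mpr (by simpa using hd))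
        rw [map_add]
        omega
      · exact absurd rfl hd
    · have := hQ.degree_add_le j d hd
      omega
  sub_one_eq := by
    have hmul : monomial (u + v) (1 : R) = monomial u 1 * monomial v 1 := by
      rw [monomial_mul, one_mul]
    simp only [add_mul, Finset.sum_add_distrib, mul_assoc, ← Finset.mul_sum, ← hP.sub_one_eq,
      ← hQ.sub_one_eq]
    linear_combination hmul

end IsFarkasCertificate

variable (R) in
def farkasExponents [IsOrderedRing R] (a : ι → σ →₀ ℕ) : AddSubmonoid (σ →₀ ℕ) where
  carrier := {b | ∃ Q : ι → MvPolynomial σ R, IsFarkasCertificate a b Q}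
  zero_mem' := ⟨0, .zero⟩
  add_mem' := fun ⟨_, hQ⟩ ⟨_, hP⟩ => ⟨_, hQ.add hP⟩

theorem sum_nsmul_mem_farkasExponents [IsOrderedRing R] (a : ι → σ →₀ ℕ) (x : ι → ℕ) :
    ∑ j, x j • a j ∈ farkasExponents R a := by
  classical
  have hcol (j : ι) : a j ∈ farkasExponents R a := ⟨_, .single j⟩
  exact AddSubmonoid.sum_mem _ fun j _ => AddSubmonoid.nsmul_mem _ (hcol j) _

end MvPolynomial

theorem discrete_farkas_degree_bound
    (m n : ℕ) (A : Matrix (Fin m) (Fin n) ℕ) (b : Fin m → ℕ)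
    (x : Fin n → ℕ) (hx : ∀ i, ∑ j, A i j * x j = b i) :
    ∃ Q : Fin n → MvPolynomial (Fin m) ℝ,
      (∀ j d, 0 ≤ (Q j).coeff d) ∧
      (∀ j, (Q j).totalDegree ≤ (∑ i, b i) - ⨅ k, ∑ i, A i k) ∧
      (∏ i, X i ^ b i : MvPolynomial (Fin m) ℝ) - 1 =
        ∑ j, Q j * ((∏ i, X i ^ A i j) - 1) := by
  set col : Fin n → Fin m →₀ ℕ := fun j => Finsupp.equivFunOnFinite.symm fun i => A i j
  have hb : Finsupp.equivFunOnFinite.symm b = ∑ j, x j • col j := by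
    ext i
    simp [col, Finsupp.finsetSum_apply, ← hx, mul_comm]
  obtain ⟨Q, hQ⟩ := sum_nsmul_mem_farkasExponents (R := ℝ) col x
  rw [← hb] at hQ
  refine ⟨Q, hQ.coeff_nonneg, fun j => totalDegree_le_of_forall_degree_le fun d hd => ?_, ?_⟩
  · have hdeg := hQ.degree_add_le j d hd
    have hmin : ⨅ k, ∑ i, A i k ≤ ∑ i, A i j := ciInf_le (OrderBot.bddBelow _) j
    simp only [Finsupp.degree_eq_sum, col, Finsupp.coe_equivFunOnFinite_symm] at hdeg ⊢
    omega
  · simpa only [prod_X_pow_eq_monomial_equivFunOnFinite_symm] using hQ.sub_one_eq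
end

section
/- Let A ∈ ℕ^{m×n}, b ∈ ℕ^m, and suppose z^b - 1 = ∑_{j=1}^n Q_j(z)(z^{A_j} - 1) for polynomials Q_j ∈ ℝ[z_1,…,z_m] with nonnegative coefficients. Then for every λ ∈ ℝ^m with A'λ ≥ 0 (componentwise, where A' is the transpose of A), one has b'λ ≥ 0. -/
/-! At `z = (e^{λ_1}, …, e^{λ_m})` the monomial `z^c` evaluates to `e^{c'λ}`, and polynomials with
nonnegative coefficients evaluate to nonnegative numbers. So if every `e^{(A'λ)_j} ≥ 1`, the
identity forces `e^{b'λ} - 1 ≥ 0`, i.e. `b'λ ≥ 0`. -/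

open MvPolynomial

namespace MvPolynomial

variable {σ R : Type*}

theorem eval_nonneg_of_coeff_nonneg [CommSemiring R] [PartialOrder R] [IsOrderedRing R]
    {p : MvPolynomial σ R} (hp : ∀ d, 0 ≤ p.coeff d) {x : σ → R} (hx : ∀ i, 0 ≤ x i) :
    0 ≤ eval x p := by
  rw [eval_eq]
  exact Finset.sum_nonneg fun d _ =>
    mul_nonneg (hp d) (Finset.prod_nonneg fun i _ => pow_nonneg (hx i) _)

theorem one_le_eval_of_sub_one_eq_sum [CommRing R] [PartialOrder R] [IsOrderedRing R]
    {ι : Type*} {s : Finset ι} {p : MvPolynomial σ R} {Q q : ι → MvPolynomial σ R}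
    (h : p - 1 = ∑ j ∈ s, Q j * (q j - 1)) (hQ : ∀ j d, 0 ≤ (Q j).coeff d)
    {x : σ → R} (hx : ∀ i, 0 ≤ x i) (hq : ∀ j ∈ s, 1 ≤ eval x (q j)) :
    1 ≤ eval x p := by
  have hsum := congrArg (eval x) h
  simp only [map_sub, map_sum, map_mul, map_one] at hsum
  refine sub_nonneg.mp (hsum ▸ Finset.sum_nonneg fun j hj => ?_)
  exact mul_nonneg (eval_nonneg_of_coeff_nonneg (hQ j) hx) (sub_nonneg.mpr (hq j hj))

theorem eval_exp_prod_X_pow [Fintype σ] (lam : σ → ℝ) (c : σ → ℕ) :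
    eval (fun i => Real.exp (lam i)) (∏ i, X i ^ c i) = Real.exp (∑ i, (c i : ℝ) * lam i) := by
  simp only [map_prod, map_pow, eval_X, Real.exp_sum, ← Real.exp_nat_mul]

end MvPolynomial

theorem discrete_farkas_implies_classical
    (m n : ℕ) (A : Matrix (Fin m) (Fin n) ℕ) (b : Fin m → ℕ)
    (Q : Fin n → MvPolynomial (Fin m) ℝ)
    (hQ : ∀ j d, 0 ≤ (Q j).coeff d)
    (h : (∏ i, X i ^ b i : MvPolynomial (Fin m) ℝ) - 1 =
        ∑ j, Q j * ((∏ i, X i ^ A i j) - 1))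
    (lam : Fin m → ℝ) (hlam : ∀ j, 0 ≤ ∑ i, (A i j : ℝ) * lam i) :
    0 ≤ ∑ i, (b i : ℝ) * lam i := by
  have hexp := one_le_eval_of_sub_one_eq_sum h hQ (fun i => (Real.exp_pos (lam i)).le)
    fun j _ => by rw [eval_exp_prod_X_pow]; exact Real.one_le_exp (hlam j)
  rw [eval_exp_prod_X_pow] at hexp
  exact Real.one_le_exp_iff.mp hexp
end

section
/- Let a ∈ ℕ^n with a_j ≥ 1 for all j, and b ∈ ℕ. The knapsack equation a_1 x_1 + ⋯ + a_n x_n = b has a solution x ∈ ℕ^n if and only if the univariate polynomial z^b - 1 can be written as ∑_{j=1}^n Q_j(z)(z^{a_j} - 1) for univariate polynomials Q_j ∈ ℝ[z] with nonnegative coefficients of degree at most b - min_j a_j. -/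
/-!
The representable numbers form the additive submonoid of `ℕ` generated by the `a j`. The numbers
`b` admitting a certificate also form a submonoid, since
`X ^ (b + c) - 1 = (X ^ b - 1) + X ^ b * (X ^ c - 1)`, and it contains each `a j`.

Conversely, let `B` be the set of non-representable numbers `v ≤ b` and suppose `b ∈ B`. The linear
functional `p ↦ ∑ v ∈ B, p.coeff v` takes the value `1` on `X ^ b - 1`, since `0 ∉ B`. On
`q * (X ^ d - 1)` with `q` having nonnegative coefficients it is nonpositive whenever `B` is closed
under subtracting `d`, which holds for `d = a j`. Hence it is nonpositive on the right-hand side, a contradiction.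
-/

open Polynomial Finset

theorem natDegree_le_sub_of_natDegree_mul_X_pow_le {R : Type*} [Semiring R] {p : R[X]} {n m : ℕ}
    (h : (p * X ^ n).natDegree ≤ m) : p.natDegree ≤ m - n := by
  nontriviality R
  rcases eq_or_ne p 0 with rfl | hp
  · simp
  · rw [natDegree_mul_X_pow n hp] at h
    omega

section Certificate

variable {R ι : Type*} [CommRing R] [PartialOrder R] [Fintype ι]

theorem sum_coeff_mul_X_pow_sub_one_nonpos [IsOrderedRing R] {q : R[X]}
    (hq : ∀ i, 0 ≤ q.coeff i) {d : ℕ} {B : Finset ℕ} (hB : ∀ v ∈ B, d ≤ v → v - d ∈ B) :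
    ∑ v ∈ B, (q * (X ^ d - 1)).coeff v ≤ 0 := by
  have hinj : Set.InjOn (· - d) (B.filter (d ≤ ·)) := fun v hv w hw h => by
    simp only [mem_coe, mem_filter] at hv hw h
    omega
  have hsub : (B.filter (d ≤ ·)).image (· - d) ⊆ B := by
    simpa [image_subset_iff] using hB
  calc ∑ v ∈ B, (q * (X ^ d - 1)).coeff v
      = ∑ u ∈ (B.filter (d ≤ ·)).image (· - d), q.coeff u - ∑ v ∈ B, q.coeff v := by
        rw [sum_image hinj, sum_filter, ← sum_sub_distrib]
        simp [mul_sub, coeff_mul_X_pow']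
    _ ≤ 0 := sub_nonpos.2 (sum_le_sum_of_subset_of_nonneg hsub fun u _ _ => hq u)

variable (R) in
/-- The degree bound reads `natDegree (Q j * X ^ a j) ≤ b` rather than `natDegree (Q j) ≤ b - a j`:
with truncated subtraction the latter would not be additive in `b`. -/
def farkasCertified [IsOrderedRing R] (a : ι → ℕ) : AddSubmonoid ℕ where
  carrier := {b | ∃ Q : ι → R[X], (∀ j i, 0 ≤ (Q j).coeff i) ∧
    (∀ j, (Q j * X ^ a j).natDegree ≤ b) ∧ (X : R[X]) ^ b - 1 = ∑ j, Q j * (X ^ a j - 1)}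
  zero_mem' := ⟨0, by simp⟩
  add_mem' := by
    rintro b c ⟨P, hP, hPdeg, hPeq⟩ ⟨Q, hQ, hQdeg, hQeq⟩
    refine ⟨fun j => P j + X ^ b * Q j, fun j i => ?_, fun j => ?_, ?_⟩
    · rw [coeff_add, coeff_X_pow_mul']
      split_ifs <;> simp [hP, hQ, add_nonneg]
    · rw [show (P j + X ^ b * Q j) * X ^ a j = P j * X ^ a j + X ^ b * (Q j * X ^ a j) by ring]
      exact natDegree_add_le_of_degree_le ((hPdeg j).trans (Nat.le_add_right b c))
        (natDegree_mul_le_of_le (natDegree_X_pow_le b) (hQdeg j))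
    · simp only [pow_add, add_mul, sum_add_distrib, mul_assoc, ← mul_sum, ← hPeq, ← hQeq]
      ring

theorem mem_farkasCertified [IsOrderedRing R] (a : ι → ℕ) (j : ι) :
    a j ∈ farkasCertified R a := by
  classical
  refine ⟨Pi.single j 1, fun i k => ?_, fun i => ?_, ?_⟩
  · rcases eq_or_ne i j with rfl | hij <;> simp [coeff_one, apply_ite, *]
  · rcases eq_or_ne i j with rfl | hij <;> simp [natDegree_X_pow_le, *]
  · simp [Pi.single_apply, ite_mul]

theorem closure_range_le_farkasCertified [IsOrderedRing R] (a : ι → ℕ) :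
    AddSubmonoid.closure (Set.range a) ≤ farkasCertified R a :=
  AddSubmonoid.closure_le.2 (Set.range_subset_iff.2 (mem_farkasCertified a))

theorem mem_closure_range_of_X_pow_sub_one_eq_sum [IsStrictOrderedRing R] {a : ι → ℕ} {b : ℕ}
    {Q : ι → R[X]} (hQ : ∀ j i, 0 ≤ (Q j).coeff i)
    (h : (X : R[X]) ^ b - 1 = ∑ j, Q j * (X ^ a j - 1)) :
    b ∈ AddSubmonoid.closure (Set.range a) := by
  classical
  by_contra hb
  set B := (range (b + 1)).filter (· ∉ AddSubmonoid.closure (Set.range a))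
  have hbB : b ∈ B := by simp [B, hb]
  have h0B : 0 ∉ B := by simp [B, zero_mem]
  have hB : ∀ j, ∀ v ∈ B, a j ≤ v → v - a j ∈ B := by
    intro j v hv hav
    simp only [B, mem_filter, mem_range] at hv ⊢
    refine ⟨by omega, fun hmem => hv.2 ?_⟩
    rw [← Nat.sub_add_cancel hav]
    exact add_mem hmem (AddSubmonoid.subset_closure ⟨j, rfl⟩)
  have hone : ∑ v ∈ B, ((X : R[X]) ^ b - 1).coeff v = 1 := by
    rw [sum_congr rfl fun v hv => by
      rw [coeff_sub, coeff_X_pow, coeff_one, if_neg (ne_of_mem_of_not_mem hv h0B), sub_zero]]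
    simp [hbB]
  have hnonpos : ∑ v ∈ B, (∑ j, Q j * (X ^ a j - 1)).coeff v ≤ 0 := by
    simp only [finsetSum_coeff]
    rw [sum_comm]
    exact sum_nonpos fun j _ => sum_coeff_mul_X_pow_sub_one_nonpos (hQ j) (hB j)
  rw [← h, hone] at hnonpos
  exact (zero_lt_one.trans_le hnonpos).false

end Certificate

theorem discrete_farkas_knapsack_general
    (n : ℕ) (a : Fin n → ℕ) (b : ℕ) :
    (∃ x : Fin n → ℕ, ∑ j, a j * x j = b) ↔
    (∃ Q : Fin n → Polynomial ℝ,
      (∀ j i, 0 ≤ (Q j).coeff i) ∧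
      (∀ j, (Q j).natDegree ≤ b - ⨅ j, a j) ∧
      (X : Polynomial ℝ) ^ b - 1 = ∑ j, Q j * (X ^ a j - 1)) := by
  have hclosure : (∃ x : Fin n → ℕ, ∑ j, a j * x j = b) ↔
      b ∈ AddSubmonoid.closure (Set.range a) := by
    simp [AddSubmonoid.mem_closure_range_iff_of_fintype, mul_comm, eq_comm]
  rw [hclosure]
  refine ⟨fun hb => ?_, fun ⟨Q, hQ, _, h⟩ => mem_closure_range_of_X_pow_sub_one_eq_sum hQ h⟩
  obtain ⟨Q, hQ, hdeg, h⟩ := closure_range_le_farkasCertified (R := ℝ) a hb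
  refine ⟨Q, hQ, fun j => ?_, h⟩
  calc (Q j).natDegree ≤ b - a j := natDegree_le_sub_of_natDegree_mul_X_pow_le (hdeg j)
    _ ≤ b - ⨅ j, a j := Nat.sub_le_sub_left (ciInf_le (OrderBot.bddBelow _) j) b

theorem discrete_farkas_knapsack
    (n : ℕ) (a : Fin n → ℕ) (ha : ∀ j, 1 ≤ a j) (b : ℕ) :
    (∃ x : Fin n → ℕ, ∑ j, a j * x j = b) ↔
    (∃ Q : Fin n → Polynomial ℝ,
      (∀ j i, 0 ≤ (Q j).coeff i) ∧
      (∀ j, (Q j).natDegree ≤ b - ⨅ j, a j) ∧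
      (X : Polynomial ℝ) ^ b - 1 = ∑ j, Q j * (X ^ a j - 1)) :=
  discrete_farkas_knapsack_general n a b
end
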